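/- arXiv:2408.13047 — 2 statements merged into one kernel-verified Lean document; each statement's English description precedes it below -/
import Mathlib

section
/- Let S ∈ ℝ^{J×J} and H ∈ ℝ^{J×J} be symmetric positive definite. Then 1_Jᵀ S^{-1} 1_J − (1_Jᵀ H 1_J)² / (1_Jᵀ H S H 1_J) = ‖(I − P) S^{-1/2} 1_J‖², where P = S^{1/2} H 1_J (1_Jᵀ H S H 1_J)^{-1} 1_Jᵀ H S^{1/2}; in particular this difference is nonnegative. -/
open Matrix

namespace Matrix.PosSemidef

open scoped ComplexOrder

noncomputable def sqrt {n : Type*} [Fintype n] [DecidableEq n] {𝕜 : Type*} [RCLike 𝕜]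
    {A : Matrix n n 𝕜} (hA : PosSemidef A) : Matrix n n 𝕜 :=
  hA.1.eigenvectorUnitary.1 * diagonal ((↑) ∘ (√·) ∘ hA.1.eigenvalues) *
  (star hA.1.eigenvectorUnitary : Matrix n n 𝕜)

end Matrix.PosSemidef

/-!
Write `R = S^{1/2}` (symmetric, `R * R = S`) and `v = R⁻¹ 1`. Then `u ⬝ᵥ u = c`,
`u ⬝ᵥ v = 1ᵀ H 1` and `v ⬝ᵥ v = 1ᵀ S⁻¹ 1`, so the identity is Pythagoras for the orthogonal
projection of `v` onto the line `ℝ u`: `‖v - (u ⬝ᵥ v / u ⬝ᵥ u) u‖² = ‖v‖² - (u ⬝ᵥ v)² / ‖u‖²`.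
-/

namespace Matrix.PosSemidef

open scoped MatrixOrder ComplexOrder

variable {n 𝕜 : Type*} [Fintype n] [DecidableEq n] [RCLike 𝕜] {A : Matrix n n 𝕜}

theorem sqrt_eq_cfcSqrt (hA : A.PosSemidef) : hA.sqrt = CFC.sqrt A := by
  rw [CFC.sqrt_eq_cfc, cfc_nnreal_eq_real _ A, hA.1.cfc_eq, IsHermitian.cfc,
    Unitary.conjStarAlgAut_apply, sqrt]
  congr! with i
  rw [Real.sqrt]

theorem sqrt_mul_sqrt (hA : A.PosSemidef) : hA.sqrt * hA.sqrt = A := by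
  rw [sqrt_eq_cfcSqrt]; exact CFC.sqrt_mul_sqrt_self A hA.nonneg

theorem isHermitian_sqrt (hA : A.PosSemidef) : hA.sqrt.IsHermitian := by
  rw [sqrt_eq_cfcSqrt]; exact (CFC.sqrt_nonneg A).posSemidef.isHermitian

end Matrix.PosSemidef

namespace Matrix

section ProjectionComplement

variable {n K : Type*} [Fintype n] [DecidableEq n] [Field K] [LinearOrder K]
  [IsStrictOrderedRing K]

theorem dotProduct_self_of_eq_one_sub_proj_mulVec {u v w : n → K}
    (hw : w = (1 - (u ⬝ᵥ u)⁻¹ • vecMulVec u u) *ᵥ v) :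
    w ⬝ᵥ w = v ⬝ᵥ v - (u ⬝ᵥ v) ^ 2 / (u ⬝ᵥ u) := by
  have hw' : w = v - ((u ⬝ᵥ u)⁻¹ * (u ⬝ᵥ v)) • u := by
    rw [hw, sub_mulVec, one_mulVec, smul_mulVec, vecMulVec_mulVec, op_smul_eq_smul, smul_smul]
  obtain hu | hu := eq_or_ne (u ⬝ᵥ u) 0
  · obtain rfl : u = 0 := dotProduct_self_eq_zero.mp hu
    simp [hw']
  · subst hw'
    simp only [sub_dotProduct, dotProduct_sub, smul_dotProduct, dotProduct_smul, smul_eq_mul,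
      dotProduct_comm v u]
    field_simp
    ring

end ProjectionComplement

theorem mulVec_dotProduct_mulVec {m n R : Type*} [Fintype m] [Fintype n] [CommSemiring R]
    (A : Matrix m n R) (B : Matrix m n R) (x y : n → R) :
    (A *ᵥ x) ⬝ᵥ (B *ᵥ y) = x ⬝ᵥ (Aᵀ * B) *ᵥ y := by
  rw [← vecMul_transpose, ← dotProduct_mulVec, mulVec_mulVec]

end Matrix

theorem stmt_9_general (J : ℕ) (S H : Matrix (Fin J) (Fin J) ℝ)
    (hS : S.PosDef) (hH : H.PosDef)
    (ones : Fin J → ℝ)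
    (Rt : Matrix (Fin J) (Fin J) ℝ) (hRt : Rt = hS.posSemidef.sqrt)
    (c : ℝ) (hc : c = ones ⬝ᵥ (H * S * H).mulVec ones)
    (u : Fin J → ℝ) (hu : u = (Rt * H).mulVec ones)
    (P : Matrix (Fin J) (Fin J) ℝ) (hP : P = c⁻¹ • Matrix.vecMulVec u u)
    (wv : Fin J → ℝ)
    (hwv : wv = ((1 : Matrix (Fin J) (Fin J) ℝ) - P).mulVec (Rt⁻¹.mulVec ones)) :
    ones ⬝ᵥ S⁻¹.mulVec ones - (ones ⬝ᵥ H.mulVec ones) ^ 2 / c = wv ⬝ᵥ wv ∧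
      0 ≤ ones ⬝ᵥ S⁻¹.mulVec ones - (ones ⬝ᵥ H.mulVec ones) ^ 2 / c := by
  have hRt_symm : Rtᵀ = Rt := hRt ▸ hS.posSemidef.isHermitian_sqrt.eq
  have hRt_sq : Rt * Rt = S := hRt ▸ hS.posSemidef.sqrt_mul_sqrt
  have hRt_det : IsUnit Rt.det := by
    refine isUnit_of_mul_isUnit_left (y := Rt.det) ?_
    rw [← det_mul, hRt_sq]
    exact hS.det_pos.ne'.isUnit
  have hH_symm : Hᵀ = H := hH.isHermitian.eq
  have huu : u ⬝ᵥ u = c := by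
    rw [hu, hc, mulVec_dotProduct_mulVec, transpose_mul, hRt_symm, hH_symm, Matrix.mul_assoc,
      ← Matrix.mul_assoc Rt, hRt_sq, Matrix.mul_assoc]
  have huv : u ⬝ᵥ Rt⁻¹ *ᵥ ones = ones ⬝ᵥ H *ᵥ ones := by
    rw [hu, mulVec_dotProduct_mulVec, transpose_mul, hRt_symm, hH_symm, Matrix.mul_assoc,
      mul_nonsing_inv _ hRt_det, Matrix.mul_one]
  have hvv : (Rt⁻¹ *ᵥ ones) ⬝ᵥ Rt⁻¹ *ᵥ ones = ones ⬝ᵥ S⁻¹ *ᵥ ones := by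
    rw [mulVec_dotProduct_mulVec, transpose_nonsing_inv, hRt_symm, ← Matrix.mul_inv_rev, hRt_sq]
  have hw : wv = (1 - (u ⬝ᵥ u)⁻¹ • vecMulVec u u) *ᵥ Rt⁻¹ *ᵥ ones := by rw [hwv, hP, huu]
  have key := dotProduct_self_of_eq_one_sub_proj_mulVec hw
  rw [huu, huv, hvv] at key
  exact ⟨key.symm, key ▸ Finset.sum_nonneg fun i _ => mul_self_nonneg (wv i)⟩

/-- Efficiency identity: `1ᵀS⁻¹1 − (1ᵀH1)²/(1ᵀHSH1)` equals the squared norm of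
`(I − P) S^{-1/2} 1` where `P` projects onto the span of `S^{1/2}H1`; in
particular it is nonnegative. -/
theorem stmt_9 (J : ℕ) (hJ : 0 < J) (S H : Matrix (Fin J) (Fin J) ℝ)
    (hS : S.PosDef) (hH : H.PosDef)
    (ones : Fin J → ℝ) (hones : ones = fun _ => 1)
    (Rt : Matrix (Fin J) (Fin J) ℝ) (hRt : Rt = hS.posSemidef.sqrt)
    (c : ℝ) (hc : c = ones ⬝ᵥ (H * S * H).mulVec ones)
    (u : Fin J → ℝ) (hu : u = (Rt * H).mulVec ones)
    (P : Matrix (Fin J) (Fin J) ℝ) (hP : P = c⁻¹ • Matrix.vecMulVec u u)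
    (wv : Fin J → ℝ)
    (hwv : wv = ((1 : Matrix (Fin J) (Fin J) ℝ) - P).mulVec (Rt⁻¹.mulVec ones)) :
    ones ⬝ᵥ S⁻¹.mulVec ones - (ones ⬝ᵥ H.mulVec ones) ^ 2 / c = wv ⬝ᵥ wv ∧
      0 ≤ ones ⬝ᵥ S⁻¹.mulVec ones - (ones ⬝ᵥ H.mulVec ones) ^ 2 / c :=
  stmt_9_general J S H hS hH ones Rt hRt c hc u hu P hP wv hwv
end

section
/- For every λ ∈ (0,1) and σ² > 0, the 3×3 symmetric matrix Q_B(λ) = σ²·[[1/(λ(1−λ)), 1/λ, 1/λ], [1/λ, 1/λ, (2−λ)/(2λ)], [1/λ, (2−λ)/(2λ), 2(3−2λ)/λ]] is positive definite. -/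
/-!
Completing the square in the quadratic form `xᵀ Q_B x / σ²` gives
`λ(1-λ) · xᵀ Q_B x / σ² = (x₀ + (1-λ)(x₁ + x₂))² + λ(1-λ)(x₁ + x₂/2)² + (1-λ)(5 - 13λ/4) x₂²`,
a sum of squares with positive weights for `0 < λ < 1`, vanishing only at `x = 0`.
-/

open Matrix

theorem Matrix.posDef_fin_three_of_dotProduct_mulVec_eq {M : Matrix (Fin 3) (Fin 3) ℝ}
    (hM : M.IsHermitian) {a b c d e f : ℝ} (ha : 0 < a) (hd : 0 < d) (hf : 0 < f)
    (hq : ∀ x : Fin 3 → ℝ, x ⬝ᵥ M *ᵥ x =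
      a * (x 0 + b * x 1 + c * x 2) ^ 2 + d * (x 1 + e * x 2) ^ 2 + f * x 2 ^ 2) :
    M.PosDef := by
  refine .of_dotProduct_mulVec_pos hM fun x hx => ?_
  rw [star_trivial, hq]
  by_contra! hle
  have t0 := mul_nonneg ha.le (sq_nonneg (x 0 + b * x 1 + c * x 2))
  have t1 := mul_nonneg hd.le (sq_nonneg (x 1 + e * x 2))
  have t2 := mul_nonneg hf.le (sq_nonneg (x 2))
  have h2 : x 2 = 0 := by
    simpa [hf.ne'] using (show f * x 2 ^ 2 = 0 by linarith)
  have h1 : x 1 = 0 := by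
    simpa [hd.ne', h2] using (show d * (x 1 + e * x 2) ^ 2 = 0 by linarith)
  have h0 : x 0 = 0 := by
    simpa [ha.ne', h1, h2] using (show a * (x 0 + b * x 1 + c * x 2) ^ 2 = 0 by linarith)
  exact hx (funext fun i => by fin_cases i <;> assumption)

/-- For every `λ ∈ (0,1)` and `σ² > 0`, the matrix `Q_B(λ)` is positive definite. -/
theorem stmt_15 (l σ2 : ℝ) (hl : 0 < l) (hl1 : l < 1) (hσ : 0 < σ2) :
    (σ2 • !![1/(l*(1-l)), 1/l, 1/l;
             1/l, 1/l, (2-l)/(2*l);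
             1/l, (2-l)/(2*l), 2*(3-2*l)/l] :
      Matrix (Fin 3) (Fin 3) ℝ).PosDef := by
  have h1l : 0 < 1 - l := sub_pos.mpr hl1
  refine PosDef.smul (posDef_fin_three_of_dotProduct_mulVec_eq ?symm
    (a := 1 / (l * (1 - l))) (b := 1 - l) (c := 1 - l) (d := 1) (e := 1 / 2)
    (f := (5 - 13 * l / 4) / l) (by positivity) one_pos (div_pos (by linarith) hl) ?sumSq) hσ
  case symm =>
    ext i j
    fin_cases i <;> fin_cases j <;> simp
  case sumSq =>
    intro x
    have : 1 - l ≠ 0 := h1l.ne'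
    simp only [dotProduct, mulVec, one_div, _root_.mul_inv_rev, of_apply, cons_val',
      cons_val_fin_one, Fin.sum_univ_three, Fin.isValue, cons_val_zero, cons_val_one, cons_val,
      one_mul]
    field_simp
    ring
end
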